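/- arXiv:1504.03000 — 9 statements merged into one kernel-verified Lean document; each statement's English description precedes it below -/
import Mathlib

section
/- A group homomorphism φ : H → G is a cover of G (i.e., there exists a class of groups F closed under isomorphism such that φ is an F-cover) if and only if the map φ* : End(H) → Hom(H,G) given by f ↦ φ ∘ f is surjective and every endomorphism f of H with φ ∘ f = φ is an automorphism of H. -/
theorem MonoidHom.exists_comp_eq_of_mulEquiv {K L H G : Type*} [Monoid K] [Monoid L] [Monoid H]
    [Monoid G] (φ : H →* G) (e : K ≃* L) (hL : ∀ ψ : L →* G, ∃ f : L →* H, φ.comp f = ψ)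
    (ψ : K →* G) : ∃ f : K →* H, φ.comp f = ψ := by
  obtain ⟨f, hf⟩ := hL (ψ.comp e.symm)
  refine ⟨f.comp e, ?_⟩
  rw [← MonoidHom.comp_assoc, hf, MonoidHom.comp_assoc,
    MulEquiv.coe_monoidHom_symm_comp_coe_monoidHom, MonoidHom.comp_id]

/-- φ : H → G is a cover of G (there exists a class F of groups,
closed under isomorphism, such that φ is an F-cover) iff
f ↦ φ∘f : End(H) → Hom(H,G) is surjective and every f ∈ End(H) with φ∘f = φ
is an automorphism of H. -/
theorem cover_characterization {H G : Type} [Group H] [Group G] (φ : H →* G) :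
    (∃ F : Set GrpCat,
      (∀ A B : GrpCat, Nonempty (A ≃* B) → A ∈ F → B ∈ F) ∧
      GrpCat.of H ∈ F ∧
      (∀ K : GrpCat, K ∈ F → ∀ ψ : K →* G, ∃ f : K →* H, φ.comp f = ψ) ∧
      (∀ f : H →* H, φ.comp f = φ → Function.Bijective f)) ↔
    (Function.Surjective (fun f : H →* H => φ.comp f) ∧
      ∀ f : H →* H, φ.comp f = φ → Function.Bijective f) := by
  constructor
  · rintro ⟨F, -, hHF, hprecover, hcover⟩
    exact ⟨hprecover (GrpCat.of H) hHF, hcover⟩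
  · rintro ⟨hsurj, hcover⟩
    refine ⟨{A | Nonempty (A ≃* GrpCat.of H)}, ?_, ⟨MulEquiv.refl _⟩, ?_, hcover⟩
    · rintro A B ⟨eAB⟩ ⟨eA⟩
      exact ⟨eAB.symm.trans eA⟩
    · rintro K ⟨e⟩
      exact φ.exists_comp_eq_of_mulEquiv e hsurj
end

section
/- Let π : H → G be a surjective group homomorphism such that π* : End(H) → Hom(H,G), f ↦ π∘f, is surjective and every endomorphism f of H with π∘f = π is an automorphism. If the only endomorphism f of H with π∘f = π is the identity, then the kernel of π is central in H. -/
/-- if π : H ↠ G is a cover (composition with π maps End(H) onto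
Hom(H,G) and every endomorphism fixing π is an automorphism) and the only
endomorphism f of H with π∘f = π is the identity, then Ker π is central in H. -/
theorem ker_central_of_trivial_coGalois {H G : Type} [Group H] [Group G] (π : H →* G)
    (hπ : Function.Surjective π)
    (hsurj : Function.Surjective (fun f : H →* H => π.comp f))
    (hcov : ∀ f : H →* H, π.comp f = π → Function.Bijective f)
    (htriv : ∀ f : H →* H, π.comp f = π → f = MonoidHom.id H) :
    π.ker ≤ Subgroup.center H := by
  intro k hk
  rw [MonoidHom.mem_ker] at hk
  rw [Subgroup.mem_center_iff]
  intro h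
  have hf : π.comp (MulAut.conj k).toMonoidHom = π := by
    ext x
    simp [hk]
  have := htriv _ hf
  have hx : k * h * k⁻¹ = h := by
    have := congrArg (fun f : H →* H => f h) this
    simpa [MulAut.conj] using this
  calc h * k = k * h * k⁻¹ * k := by rw [hx]
    _ = k * h := by group
end

section
/- Let G be a group, j ≥ 1, and a, X, X', Y, z_1, …, z_j ∈ G. If [Y, [a,X']] ∈ Z_j(G) and [a,Y] ∈ Z_{j+1}(G), then [a, XYX', z_1, …, z_j] = [a, XX', z_1, …, z_j] · [a, Y, z_1, …, z_j]. -/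
/-!
Modulo `Z_j(G)` the commutator `[a, Y]` is central and `Y` commutes with `[a, X']`, so the
commutator identities give `[a, X Y X'] ≡ [a, X X'] [a, Y]`. A congruence `u ≡ v w (mod Z_{k+1})`
with `w ∈ Z_{k+2}` survives commutation with any `z` one level down,
`[u, z] ≡ [v, z] [w, z] (mod Z_k)`, because both the error term and `[w, z]` are central modulo
`Z_k`. After `j` commutations the congruence holds modulo `Z_0 = 1`, i.e. it is an equality.
-/

open scoped commutatorElement

/-- Iterated left-normed commutator `[a, z₁, …, z_r]`. -/
def itComm {G : Type} [Group G] (a : G) (zs : List G) : G :=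
  zs.foldl (fun x y => ⁅x, y⁆) a

section CommutatorIdentities

variable {G : Type} [Group G]

open Subgroup

theorem commutatorElement_mul_left_of_mem_center {d : G} (hd : d ∈ center G) (g z : G) :
    ⁅d * g, z⁆ = ⁅g, z⁆ := by
  rw [commutatorElement_mul_left_eq_conj_mul,
    commutatorElement_eq_one_iff_commute.2 (mem_center_iff.1 hd z).symm, mul_one,
    ← mem_center_iff.1 hd, mul_inv_cancel_right]

theorem commutatorElement_mul_left_of_commutatorElement_mem_center {v w z : G}
    (h : ⁅w, z⁆ ∈ center G) : ⁅v * w, z⁆ = ⁅v, z⁆ * ⁅w, z⁆ := by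
  rw [commutatorElement_mul_left_eq_conj_mul, mem_center_iff.1 h, mul_inv_cancel_right,
    mem_center_iff.1 h]

theorem commutatorElement_mul_mul_right_of_commute {a X X' Y : G} (hY : Commute Y ⁅a, X'⁆)
    (haY : ⁅a, Y⁆ ∈ center G) : ⁅a, X * Y * X'⁆ = ⁅a, X * X'⁆ * ⁅a, Y⁆ := by
  have hYX' : ⁅a, Y * X'⁆ = ⁅a, Y⁆ * ⁅a, X'⁆ := by
    rw [commutatorElement_mul_right_eq_mul_conj, mul_assoc _ Y, hY.eq, ← mul_assoc,
      mul_inv_cancel_right]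
  calc ⁅a, X * Y * X'⁆ = ⁅a, X⁆ * X * (⁅a, Y⁆ * (⁅a, X'⁆ * X⁻¹)) := by
        rw [mul_assoc X, commutatorElement_mul_right_eq_mul_conj, hYX']; simp only [mul_assoc]
    _ = ⁅a, X⁆ * X * (⁅a, X'⁆ * X⁻¹ * ⁅a, Y⁆) := by rw [← mem_center_iff.1 haY]
    _ = ⁅a, X * X'⁆ * ⁅a, Y⁆ := by
        rw [commutatorElement_mul_right_eq_mul_conj]; simp only [mul_assoc]

end CommutatorIdentities

theorem QuotientGroup.mk_commutatorElement {G : Type} [Group G] (N : Subgroup G) [N.Normal]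
    (x y : G) : ((⁅x, y⁆ : G) : G ⧸ N) = ⁅(x : G ⧸ N), (y : G ⧸ N)⁆ :=
  map_commutatorElement (QuotientGroup.mk' N) x y

namespace Subgroup

variable {G : Type} [Group G]

theorem mk_mem_center_iff_mem_upperCentralSeries_succ {n : ℕ} {x : G} :
    (x : G ⧸ upperCentralSeries G n) ∈ center (G ⧸ upperCentralSeries G n) ↔
      x ∈ upperCentralSeries G (n + 1) := by
  rw [mem_upperCentralSeries_succ_iff, ← mem_upperCentralSeriesStep,
    upperCentralSeriesStep_eq_comap_center]
  rfl

theorem mk_commutatorElement_eq_mul_of_mk_eq {n : ℕ} {u v w : G}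
    (hw : w ∈ upperCentralSeries G (n + 2))
    (huvw : (u : G ⧸ upperCentralSeries G (n + 1)) = v * w) (z : G) :
    ((⁅u, z⁆ : G) : G ⧸ upperCentralSeries G n) = ⁅v, z⁆ * ⁅w, z⁆ := by
  obtain ⟨d, hd, rfl⟩ : ∃ d : G, (d : G ⧸ upperCentralSeries G n) ∈ center _ ∧ u = d * (v * w) :=
    ⟨u * (v * w)⁻¹, mk_mem_center_iff_mem_upperCentralSeries_succ.2 <| by
      rwa [← div_eq_mul_inv, ← QuotientGroup.eq_iff_div_mem, QuotientGroup.mk_mul],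
      (inv_mul_cancel_right u (v * w)).symm⟩
  have hwz : ⁅(w : G ⧸ upperCentralSeries G n), (z : G ⧸ upperCentralSeries G n)⁆ ∈ center _ := by
    rw [← QuotientGroup.mk_commutatorElement]
    exact mk_mem_center_iff_mem_upperCentralSeries_succ.2 (hw z)
  simp only [QuotientGroup.mk_commutatorElement, QuotientGroup.mk_mul]
  rw [commutatorElement_mul_left_of_mem_center hd,
    commutatorElement_mul_left_of_commutatorElement_mem_center hwz]

end Subgroup

theorem itComm_eq_mul_of_mk_eq {G : Type} [Group G] {j : ℕ} {u v w : G}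
    (hw : w ∈ Subgroup.upperCentralSeries G (j + 1))
    (huvw : (u : G ⧸ Subgroup.upperCentralSeries G j) = v * w) {zs : List G}
    (hzs : zs.length = j) : itComm u zs = itComm v zs * itComm w zs := by
  induction zs generalizing j u v w with
  | nil =>
    obtain rfl : j = 0 := hzs.symm
    rwa [← QuotientGroup.mk_mul, QuotientGroup.eq, Subgroup.upperCentralSeries_zero,
      Subgroup.mem_bot, inv_mul_eq_one] at huvw
  | cons z zs ih =>
    subst hzs
    exact ih (hw z) (Subgroup.mk_commutatorElement_eq_mul_of_mk_eq hw huvw z) rfl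

theorem itComm_split_general {G : Type} [Group G] (j : ℕ) (a X X' Y : G)
    (h1 : ⁅Y, ⁅a, X'⁆⁆ ∈ upperCentralSeries G j)
    (h2 : ⁅a, Y⁆ ∈ upperCentralSeries G (j + 1)) :
    ∀ zs : List G, zs.length = j →
      itComm ⁅a, X * Y * X'⁆ zs = itComm ⁅a, X * X'⁆ zs * itComm ⁅a, Y⁆ zs := by
  intro zs hzs
  refine itComm_eq_mul_of_mk_eq h2 ?_ hzs
  have hY : Commute (Y : G ⧸ Subgroup.upperCentralSeries G j)
      ⁅(a : G ⧸ Subgroup.upperCentralSeries G j), (X' : G ⧸ Subgroup.upperCentralSeries G j)⁆ := by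
    rw [← commutatorElement_eq_one_iff_commute, ← QuotientGroup.mk_commutatorElement,
      ← QuotientGroup.mk_commutatorElement, QuotientGroup.eq_one_iff]
    exact h1
  have haY : ⁅(a : G ⧸ Subgroup.upperCentralSeries G j), (Y : G ⧸ Subgroup.upperCentralSeries G j)⁆
      ∈ Subgroup.center _ := by
    rw [← QuotientGroup.mk_commutatorElement]
    exact Subgroup.mk_mem_center_iff_mem_upperCentralSeries_succ.2 h2
  simp only [QuotientGroup.mk_commutatorElement, QuotientGroup.mk_mul]
  exact commutatorElement_mul_mul_right_of_commute hY haY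

/-- if `[Y,[a,X']] ∈ Z_j(G)` and `[a,Y] ∈ Z_{j+1}(G)` (j ≥ 1), then
`[a, X*Y*X', z₁, …, z_j] = [a, X*X', z₁, …, z_j] * [a, Y, z₁, …, z_j]`. -/
theorem itComm_split {G : Type} [Group G] (j : ℕ) (hj : 1 ≤ j) (a X X' Y : G)
    (h1 : ⁅Y, ⁅a, X'⁆⁆ ∈ upperCentralSeries G j)
    (h2 : ⁅a, Y⁆ ∈ upperCentralSeries G (j + 1)) :
    ∀ zs : List G, zs.length = j →
      itComm ⁅a, X * Y * X'⁆ zs = itComm ⁅a, X * X'⁆ zs * itComm ⁅a, Y⁆ zs :=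
  itComm_split_general j a X X' Y h1 h2
end

section
/- Let η : H → G be an envelope with trivial Galois group (the only endomorphism f of G with f∘η = η is the identity). Let ψ_1, ψ_2 : G → G be homomorphisms with ψ_1∘η = ψ_2∘η. Suppose for some i, j ≥ 0 and all x ∈ G: [Γ^{i+1}G, ψ_1(x)ψ_2(x)⁻¹, G, …(j times)…, G] = 1 and [Γ^iG, ψ_1(x)ψ_2(x)⁻¹, G, …(j+1 times)…, G] = 1. Then [Γ^iG, ψ_1(x)ψ_2(x)⁻¹, G, …(j times)…, G] = 1 for all x ∈ G. -/
/-!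
Write `d x = ψ₁ x (ψ₂ x)⁻¹`, fix `a ∈ Γ^i G` and `z₁, …, z_j`, and put
`u x = [a, d x, z₁, …, z_j]`.
The second hypothesis says that `[a, d x]` lies in the `(j+1)`-st term `Z_{j+1}` of the upper
central series, and on `Z_{j+1}` the map `w ↦ [w, z₁, …, z_j]` is a conjugation-invariant
homomorphism into the centre that kills `Z_j`. Since `d (x y) = c (d y) c⁻¹ (d x)` with
`c = ψ₁ x`, and conjugating `a` by `c` only changes it by an element of `Γ^{i+1} G`, the first
hypothesis makes `u` a homomorphism into the centre. Hence `x ↦ u x * x` is an endomorphism of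
`G`; it fixes `η` because `ψ₁ ∘ η = ψ₂ ∘ η`, so it is the identity and `u = 1`.
-/

open scoped commutatorElement

open Subgroup

section IteratedCommutator

variable {G : Type} [Group G]

@[simp]
theorem itComm_nil (a : G) : itComm a [] = a := rfl

theorem itComm_cons (a z : G) (zs : List G) : itComm a (z :: zs) = itComm ⁅a, z⁆ zs := rfl

theorem itComm_mem_upperCentralSeries {n : ℕ} {w : G} {zs : List G}
    (hw : w ∈ Subgroup.upperCentralSeries G (n + zs.length)) :
    itComm w zs ∈ Subgroup.upperCentralSeries G n := by
  induction zs generalizing w with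
  | nil => exact hw
  | cons z zs ih => exact ih (Subgroup.mem_upperCentralSeries_succ_iff.mp hw z)

theorem forall_itComm_eq_one_iff {j : ℕ} {w : G} :
    (∀ zs : List G, zs.length = j → itComm w zs = 1) ↔
      w ∈ Subgroup.upperCentralSeries G j := by
  refine ⟨fun h => ?_, fun hw zs hzs => ?_⟩
  · induction j generalizing w with
    | zero => exact h [] rfl
    | succ j ih =>
      exact Subgroup.mem_upperCentralSeries_succ_iff.mpr fun z =>
        ih fun zs hzs => h (z :: zs) (by simp [hzs])
  · subst hzs
    exact itComm_mem_upperCentralSeries (n := 0) (by rwa [zero_add])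

theorem itComm_eq_one_of_mem {w : G} {zs : List G}
    (hw : w ∈ Subgroup.upperCentralSeries G zs.length) : itComm w zs = 1 :=
  forall_itComm_eq_one_iff.mpr hw zs rfl

@[simp]
theorem itComm_one_left (zs : List G) : itComm (1 : G) zs = 1 :=
  itComm_eq_one_of_mem (one_mem _)

theorem itComm_mem_center {w : G} {zs : List G}
    (hw : w ∈ Subgroup.upperCentralSeries G (zs.length + 1)) : itComm w zs ∈ center G :=
  Subgroup.upperCentralSeries_one G ▸ itComm_mem_upperCentralSeries (by rwa [add_comm])

theorem MonoidHom.map_inv_mul_mul_eq_of_commute {M : Type*} [Group M] (f : G →* M) {g z : G}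
    (h : Commute (f g) (f z)) : f (g⁻¹ * z * g) = f z := by
  rw [map_mul, map_mul, map_inv, mul_assoc, ← h.eq, inv_mul_cancel_left]

theorem itComm_mul_and_itComm_conj (zs : List G) :
    (∀ w ∈ Subgroup.upperCentralSeries G (zs.length + 1),
      ∀ w' ∈ Subgroup.upperCentralSeries G (zs.length + 1),
        itComm (w * w') zs = itComm w zs * itComm w' zs) ∧
    (∀ w ∈ Subgroup.upperCentralSeries G (zs.length + 1), ∀ g : G,
      itComm (g * w * g⁻¹) zs = itComm w zs) := by
  induction zs with
  | nil =>
    refine ⟨fun _ _ _ _ => rfl, fun w hw g => ?_⟩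
    rw [List.length_nil, zero_add, Subgroup.upperCentralSeries_one] at hw
    rw [itComm_nil, itComm_nil, mem_center_iff.mp hw g, mul_inv_cancel_right]
  | cons z zs ih =>
    obtain ⟨ih_mul, ih_conj⟩ := ih
    have hcomm {w : G} (hw : w ∈ Subgroup.upperCentralSeries G (zs.length + 1 + 1)) (y : G) :
        ⁅w, y⁆ ∈ Subgroup.upperCentralSeries G (zs.length + 1) :=
      Subgroup.mem_upperCentralSeries_succ_iff.mp hw y
    have hconj {w : G} (hw : w ∈ Subgroup.upperCentralSeries G (zs.length + 1)) (g : G) :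
        g * w * g⁻¹ ∈ Subgroup.upperCentralSeries G (zs.length + 1) :=
      Normal.conj_mem inferInstance w hw g
    have hcentral {w : G} (hw : w ∈ Subgroup.upperCentralSeries G (zs.length + 1)) (g : G) :
        g * itComm w zs = itComm w zs * g :=
      mem_center_iff.mp (itComm_mem_center hw) g
    simp only [itComm_cons, List.length_cons]
    refine ⟨fun w hw w' hw' => ?_, fun w hw g => ?_⟩
    · rw [commutatorElement_mul_left_eq_conj_mul, ih_mul _ (hconj (hcomm hw' z) w) _ (hcomm hw z),
        ih_conj _ (hcomm hw' z), hcentral (hcomm hw z)]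
    · -- `y ↦ [w, y, zs]` is a homomorphism with central values, hence conjugation-invariant
      let χ : G →* G := MonoidHom.mk' (fun y => itComm ⁅w, y⁆ zs) fun s t => by
        rw [commutatorElement_mul_right_eq_mul_conj, mul_assoc _ s, mul_assoc,
          ih_mul _ (hcomm hw s) _ (hconj (hcomm hw t) s), ih_conj _ (hcomm hw t)]
      have hχ : itComm ⁅w, g⁻¹ * z * g⁆ zs = itComm ⁅w, z⁆ zs :=
        χ.map_inv_mul_mul_eq_of_commute (hcentral (hcomm hw z) _)
      rw [show ⁅g * w * g⁻¹, z⁆ = g * ⁅w, g⁻¹ * z * g⁆ * g⁻¹ by group,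
        ih_conj _ (hcomm hw _), hχ]

theorem itComm_mul {w w' : G} {zs : List G}
    (hw : w ∈ Subgroup.upperCentralSeries G (zs.length + 1))
    (hw' : w' ∈ Subgroup.upperCentralSeries G (zs.length + 1)) :
    itComm (w * w') zs = itComm w zs * itComm w' zs :=
  (itComm_mul_and_itComm_conj zs).1 w hw w' hw'

theorem itComm_conj {w : G} {zs : List G}
    (hw : w ∈ Subgroup.upperCentralSeries G (zs.length + 1))
    (g : G) : itComm (g * w * g⁻¹) zs = itComm w zs :=
  (itComm_mul_and_itComm_conj zs).2 w hw g

theorem itComm_commutatorElement_conj_mul {i : ℕ} {a c y y' : G} {zs : List G}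
    (ha : a ∈ (⊤ : Subgroup G).lowerCentralSeries i)
    (hy : ∀ e ∈ (⊤ : Subgroup G).lowerCentralSeries (i + 1),
      ⁅e, y⁆ ∈ Subgroup.upperCentralSeries G zs.length)
    (hay : ⁅a, y⁆ ∈ Subgroup.upperCentralSeries G (zs.length + 1))
    (hay' : ⁅a, y'⁆ ∈ Subgroup.upperCentralSeries G (zs.length + 1)) :
    itComm ⁅a, c * y * c⁻¹ * y'⁆ zs = itComm ⁅a, y⁆ zs * itComm ⁅a, y'⁆ zs := by
  -- conjugating `a` by `c` multiplies it by `e ∈ Γ^{i+1} G`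
  set e := ⁅a⁻¹, c⁻¹⁆
  have he : a * ⁅e, y⁆ * a⁻¹ ∈ Subgroup.upperCentralSeries G zs.length :=
    Normal.conj_mem inferInstance _ (hy e (commutator_mem_commutator (inv_mem ha) (mem_top _))) a
  have he' : a * ⁅e, y⁆ * a⁻¹ ∈ Subgroup.upperCentralSeries G (zs.length + 1) :=
    Subgroup.upperCentralSeries_mono G zs.length.le_succ he
  have hconj {w : G} (hw : w ∈ Subgroup.upperCentralSeries G (zs.length + 1)) (g : G) :
      g * w * g⁻¹ ∈ Subgroup.upperCentralSeries G (zs.length + 1) :=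
    Normal.conj_mem inferInstance w hw g
  have key : ⁅a, c * y * c⁻¹ * y'⁆ = c * (a * ⁅e, y⁆ * a⁻¹ * ⁅a, y⁆) * c⁻¹ *
      ((c * y * c⁻¹) * ⁅a, y'⁆ * (c * y * c⁻¹)⁻¹) := by
    simp only [e]; group
  rw [key, itComm_mul (hconj (mul_mem he' hay) c) (hconj hay' _), itComm_conj (mul_mem he' hay),
    itComm_conj hay', itComm_mul he' hay, itComm_eq_one_of_mem he, one_mul]

end IteratedCommutator

theorem MonoidHom.eq_one_of_mem_center_of_comp_eq_one {H G : Type*} [Group H] [Group G]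
    {η : H →* G} (htriv : ∀ f : G →* G, f.comp η = η → f = MonoidHom.id G) {u : G →* G}
    (hu : ∀ g, u g ∈ center G) (huη : u.comp η = 1) : u = 1 := by
  let f : G →* G := MonoidHom.mk' (fun g => u g * g) fun g h => by
    rw [map_mul, mul_assoc, mul_assoc, ← mul_assoc g, mem_center_iff.mp (hu h) g, mul_assoc]
  have hf : f.comp η = η := by
    ext h
    simpa [f] using DFunLike.congr_fun huη h
  ext g
  simpa [f] using DFunLike.congr_fun (htriv f hf) g

theorem repetition_lemma_general {H G : Type} [Group H] [Group G] (η : H →* G)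
    (htriv : ∀ f : G →* G, f.comp η = η → f = MonoidHom.id G)
    (ψ₁ ψ₂ : G →* G) (hψ : ψ₁.comp η = ψ₂.comp η) (i j : ℕ)
    (h1 : ∀ x : G, ∀ a ∈ (⊤ : Subgroup G).lowerCentralSeries (i + 1), ∀ zs : List G, zs.length = j →
      itComm ⁅a, ψ₁ x * (ψ₂ x)⁻¹⁆ zs = 1)
    (h2 : ∀ x : G, ∀ a ∈ (⊤ : Subgroup G).lowerCentralSeries i, ∀ zs : List G, zs.length = j + 1 →
      itComm ⁅a, ψ₁ x * (ψ₂ x)⁻¹⁆ zs = 1) :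
    ∀ x : G, ∀ a ∈ (⊤ : Subgroup G).lowerCentralSeries i, ∀ zs : List G, zs.length = j →
      itComm ⁅a, ψ₁ x * (ψ₂ x)⁻¹⁆ zs = 1 := by
  rintro x a ha zs rfl
  have hZ1 (g : G) : ∀ e ∈ (⊤ : Subgroup G).lowerCentralSeries (i + 1),
      ⁅e, ψ₁ g * (ψ₂ g)⁻¹⁆ ∈ Subgroup.upperCentralSeries G zs.length :=
    fun e he => forall_itComm_eq_one_iff.mp (h1 g e he)
  have hZ2 (g : G) :
      ⁅a, ψ₁ g * (ψ₂ g)⁻¹⁆ ∈ Subgroup.upperCentralSeries G (zs.length + 1) :=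
    forall_itComm_eq_one_iff.mp (h2 g a ha)
  let u : G →* G :=
    MonoidHom.mk' (fun g => itComm ⁅a, ψ₁ g * (ψ₂ g)⁻¹⁆ zs) fun g h => by
      rw [map_mul, map_mul, show ψ₁ g * ψ₁ h * (ψ₂ g * ψ₂ h)⁻¹ =
        ψ₁ g * (ψ₁ h * (ψ₂ h)⁻¹) * (ψ₁ g)⁻¹ * (ψ₁ g * (ψ₂ g)⁻¹) by group,
        itComm_commutatorElement_conj_mul ha (hZ1 h) (hZ2 h) (hZ2 g),
        mem_center_iff.mp (itComm_mem_center (hZ2 h))]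
  have huη : u.comp η = 1 := by
    ext h
    have hψh : ψ₁ (η h) = ψ₂ (η h) := DFunLike.congr_fun hψ h
    simp [u, hψh]
  have hu : u = 1 :=
    MonoidHom.eq_one_of_mem_center_of_comp_eq_one htriv (fun g => itComm_mem_center (hZ2 g)) huη
  exact DFunLike.congr_fun hu x

/-- let η : H → G be an envelope with trivial Galois group and
ψ₁, ψ₂ : G → G homomorphisms with ψ₁∘η = ψ₂∘η.  If for some i, j ≥ 0 and all x ∈ G
`[Γ^{i+1}G, ψ₁(x)ψ₂(x)⁻¹, G, …(j)…, G] = 1` and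
`[Γ^{i}G, ψ₁(x)ψ₂(x)⁻¹, G, …(j+1)…, G] = 1`, then
`[Γ^{i}G, ψ₁(x)ψ₂(x)⁻¹, G, …(j)…, G] = 1` for all x ∈ G.
(Γ indexed so that `Γ^i G = lowerCentralSeries G i`, `lowerCentralSeries G 0 = G`.) -/
theorem repetition_lemma {H G : Type} [Group H] [Group G] (η : H →* G)
    (hsurj : Function.Surjective (fun f : G →* G => f.comp η))
    (htriv : ∀ f : G →* G, f.comp η = η → f = MonoidHom.id G)
    (ψ₁ ψ₂ : G →* G) (hψ : ψ₁.comp η = ψ₂.comp η) (i j : ℕ)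
    (h1 : ∀ x : G, ∀ a ∈ (⊤ : Subgroup G).lowerCentralSeries (i + 1), ∀ zs : List G, zs.length = j →
      itComm ⁅a, ψ₁ x * (ψ₂ x)⁻¹⁆ zs = 1)
    (h2 : ∀ x : G, ∀ a ∈ (⊤ : Subgroup G).lowerCentralSeries i, ∀ zs : List G, zs.length = j + 1 →
      itComm ⁅a, ψ₁ x * (ψ₂ x)⁻¹⁆ zs = 1) :
    ∀ x : G, ∀ a ∈ (⊤ : Subgroup G).lowerCentralSeries i, ∀ zs : List G, zs.length = j →
      itComm ⁅a, ψ₁ x * (ψ₂ x)⁻¹⁆ zs = 1 :=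
  repetition_lemma_general η htriv ψ₁ ψ₂ hψ i j h1 h2
end

section
/- Let η : H → G be an envelope of groups such that the only endomorphism f of G with f∘η = η is the identity. If H is abelian, then G is abelian, and η is a localization (the map End(G) → Hom(H,G), f ↦ f∘η, is a bijection). -/
/-- let η : H → G be an envelope with trivial Galois group
(the only endomorphism f of G with f∘η = η is the identity).  If H is abelian
then G is abelian and η is a localization (f ↦ f∘η is bijective End(G) → Hom(H,G)). -/
theorem abelian_envelope_trivial_Galois_is_localization
    {H G : Type} [CommGroup H] [Group G] (η : H →* G)
    (hsurj : Function.Surjective (fun f : G →* G => f.comp η))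
    (htriv : ∀ f : G →* G, f.comp η = η → f = MonoidHom.id G) :
    (∀ a b : G, a * b = b * a) ∧
    Function.Bijective (fun f : G →* G => f.comp η) := by
  -- Step 1: the image of η is central in G.
  have hcen : ∀ (h : H) (a : G), η h * a = a * η h := by
    intro h a
    have hconj : ((MulAut.conj (η h)).toMonoidHom.comp η) = η := by
      ext h'
      simp only [MonoidHom.comp_apply, MulAut.conj_apply, MulEquiv.coe_toMonoidHom]
      rw [← map_inv, ← map_mul, ← map_mul, mul_comm h h', mul_inv_cancel_right]
    have := htriv _ hconj
    have h2 := DFunLike.congr_fun this a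
    simp only [MulEquiv.coe_toMonoidHom, MulAut.conj_apply, MonoidHom.id_apply] at h2
    calc η h * a = η h * a * (η h)⁻¹ * η h := by group
    _ = a * η h := by rw [h2]
  -- Step 2: G is abelian.
  have hcomm : ∀ a b : G, a * b = b * a := by
    intro a b
    have hconj : ((MulAut.conj a).toMonoidHom.comp η) = η := by
      ext h'
      simp only [MonoidHom.comp_apply, MulAut.conj_apply, MulEquiv.coe_toMonoidHom]
      rw [← hcen h' a, mul_inv_cancel_right]
    have := htriv _ hconj
    have h2 := DFunLike.congr_fun this b
    simp only [MulEquiv.coe_toMonoidHom, MulAut.conj_apply, MonoidHom.id_apply] at h2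
    calc a * b = a * b * a⁻¹ * a := by group
    _ = b * a := by rw [h2]
  refine ⟨hcomm, ?_, hsurj⟩
  -- Injectivity.
  letI : CommGroup G := { ‹Group G› with mul_comm := hcomm }
  intro f g hfg
  simp only at hfg
  have hE : ((f * g⁻¹) * MonoidHom.id G).comp η = η := by
    ext h
    simp only [MonoidHom.comp_apply, MonoidHom.mul_apply, MonoidHom.inv_apply,
      MonoidHom.id_apply]
    have : f (η h) = g (η h) := DFunLike.congr_fun hfg h
    rw [this, mul_inv_cancel, one_mul]
  have := htriv _ hE
  ext x
  have h2 := DFunLike.congr_fun this x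
  simp only [MonoidHom.mul_apply, MonoidHom.inv_apply, MonoidHom.id_apply] at h2
  have h3 : f x * (g x)⁻¹ = 1 := by
    have h4 : f x * (g x)⁻¹ * x = 1 * x := by rw [one_mul]; exact h2
    exact mul_right_cancel h4
  exact mul_inv_eq_one.mp h3
end

section
/- Let η : H → G be an envelope of groups with G nilpotent. Then η : H → G is a localization if and only if the Galois group of η is trivial. -/
/-!
Once the Galois group is trivial, the envelope property makes `η` rigid: the only endomorphism
`e` with `e ∘ η = η` is the identity. With `Z_n` the upper central series, rigidity forces
every map `d : G → Z_{n+1}` that is a homomorphism modulo `Z_n` and sends the image of `η` into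
`Z_n` to land in `Z_n`: for `n = 0`, `x ↦ x · d x` is an endomorphism fixing `η`; for larger
`n`, apply induction to `x ↦ ⁅d x, y⁆` for each `y`. If `f ∘ η = g ∘ η`, the defect
`d x = (f x)⁻¹ g x` is trivial on the image of `η` and is a homomorphism modulo `Z_n` as soon as
it lands in `Z_{n+1}`, so it descends from `Z_c = G` to `Z_0 = 1`, i.e. `f = g`.
-/

open scoped commutatorElement

theorem commutatorElement_mul_mul_of_mem_center {G : Type*} [Group G] {a b e y : G}
    (he : e ∈ Subgroup.center G) (hb : ⁅b, y⁆ ∈ Subgroup.center G) :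
    ⁅a * b * e, y⁆ = ⁅a, y⁆ * ⁅b, y⁆ := by
  have hey : ⁅e, y⁆ = 1 :=
    commutatorElement_eq_one_iff_mul_comm.mpr (Subgroup.mem_center_iff.mp he y).symm
  calc ⁅a * b * e, y⁆ = ⁅a * b, y⁆ := by
        rw [commutatorElement_mul_left_eq_conj_mul, hey]; group
    _ = ⁅b, y⁆ * ⁅a, y⁆ := by
        rw [commutatorElement_mul_left_eq_conj_mul, Subgroup.mem_center_iff.mp hb a]; group
    _ = ⁅a, y⁆ * ⁅b, y⁆ := (Subgroup.mem_center_iff.mp hb _).symm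

theorem eq_one_of_range_le_center_of_rigid {H G : Type*} [Group H] [Group G] {η : H →* G}
    (hrigid : ∀ e : G →* G, e.comp η = η → e = MonoidHom.id G) {d : G →* G}
    (hcenter : d.range ≤ Subgroup.center G) (hη : d.comp η = 1) : d = 1 := by
  have hcomm (a b : G) : b * d a = d a * b :=
    Subgroup.mem_center_iff.mp (hcenter ⟨a, rfl⟩) b
  let e : G →* G := MonoidHom.mk' (fun x => x * d x) fun a b => by
    simp only [map_mul, ← mul_assoc, mul_left_inj]
    rw [mul_assoc a, hcomm, ← mul_assoc]
  have he : e.comp η = η := by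
    ext h
    simpa [e] using DFunLike.congr_fun hη h
  ext x
  simpa [e] using DFunLike.congr_fun (hrigid e he) x

namespace Subgroup

variable {G : Type*} [Group G] {n : ℕ}

theorem mk_mem_center_of_mem_upperCentralSeries_succ {x : G}
    (hx : x ∈ upperCentralSeries G (n + 1)) :
    (x : G ⧸ upperCentralSeries G n) ∈ center (G ⧸ upperCentralSeries G n) := by
  have hx : x ∈ upperCentralSeriesStep (upperCentralSeries G n) := hx
  rwa [upperCentralSeriesStep_eq_comap_center] at hx

theorem mk_inv_mul_map_mul {K : Type*} [Group K] {f g : G →* K}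
    (hd : ∀ x, (f x)⁻¹ * g x ∈ upperCentralSeries K (n + 1)) (a b : G) :
    (((f (a * b))⁻¹ * g (a * b) : K) : K ⧸ upperCentralSeries K n) =
      ((f a)⁻¹ * g a : K) * ((f b)⁻¹ * g b : K) := by
  have hcentral := mem_center_iff.mp (mk_mem_center_of_mem_upperCentralSeries_succ (hd a))
    ((f b : K) : K ⧸ upperCentralSeries K n)⁻¹
  simp only [map_mul, mul_inv_rev, QuotientGroup.mk_mul, QuotientGroup.mk_inv, ← mul_assoc]
    at hcentral ⊢
  rw [hcentral]

theorem mem_upperCentralSeries_of_rigid {H : Type*} [Group H] {η : H →* G}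
    (hrigid : ∀ e : G →* G, e.comp η = η → e = MonoidHom.id G) (n : ℕ) {d : G → G}
    (hd : ∀ x, d x ∈ upperCentralSeries G (n + 1))
    (hmul : ∀ a b, (d (a * b) : G ⧸ upperCentralSeries G n) = d a * d b)
    (hη : ∀ h, d (η h) ∈ upperCentralSeries G n) (x : G) :
    d x ∈ upperCentralSeries G n := by
  induction n generalizing d with
  | zero =>
    have hmul' (a b : G) : d (a * b) = d a * d b := by
      have h := QuotientGroup.eq.mp ((hmul a b).trans (QuotientGroup.mk_mul _ _ _).symm)
      rwa [upperCentralSeries_zero, mem_bot, inv_mul_eq_one] at h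
    have hd0 : MonoidHom.mk' d hmul' = 1 :=
      eq_one_of_range_le_center_of_rigid hrigid (by rintro _ ⟨a, rfl⟩; simpa using hd a)
        (by ext h; simpa using hη h)
    simpa using DFunLike.congr_fun hd0 x
  | succ n ih =>
    rw [mem_upperCentralSeries_succ_iff]
    intro y
    refine ih (d := fun x => ⁅d x, y⁆) (fun a => mem_upperCentralSeries_succ_iff.mp (hd a) y)
      (fun a b => ?_) (fun h => mem_upperCentralSeries_succ_iff.mp (hη h) y)
    obtain ⟨e, he, hab⟩ : ∃ e ∈ upperCentralSeries G (n + 1), d (a * b) = d a * d b * e :=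
      ⟨_, QuotientGroup.eq.mp (hmul a b).symm, by group⟩
    have hmk (u v : G) : ((⁅u, v⁆ : G) : G ⧸ upperCentralSeries G n) =
        ⁅(u : G ⧸ upperCentralSeries G n), (v : G ⧸ upperCentralSeries G n)⁆ :=
      map_commutatorElement (QuotientGroup.mk' _) u v
    have hb := mk_mem_center_of_mem_upperCentralSeries_succ
      (mem_upperCentralSeries_succ_iff.mp (hd b) y)
    rw [hmk] at hb
    simp only [hab, hmk, QuotientGroup.mk_mul]
    exact commutatorElement_mul_mul_of_mem_center
      (mk_mem_center_of_mem_upperCentralSeries_succ he) hb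

end Subgroup

theorem injective_comp_of_rigid {H G : Type*} [Group H] [Group G] [Group.IsNilpotent G]
    {η : H →* G} (hrigid : ∀ e : G →* G, e.comp η = η → e = MonoidHom.id G) :
    Function.Injective fun f : G →* G => f.comp η := by
  intro f g hfg
  have hfg (h : H) : f (η h) = g (η h) := DFunLike.congr_fun hfg h
  let d (x : G) : G := (f x)⁻¹ * g x
  have descend (n : ℕ) (hn : ∀ x, d x ∈ Subgroup.upperCentralSeries G n) (x : G) :
      d x ∈ Subgroup.upperCentralSeries G 0 := by
    induction n with
    | zero => exact hn x
    | succ n ih =>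
      refine ih (Subgroup.mem_upperCentralSeries_of_rigid hrigid n hn
        (Subgroup.mk_inv_mul_map_mul hn) fun h => ?_)
      simp [d, hfg]
  obtain ⟨c, hc⟩ := Group.IsNilpotent.nilpotent G
  ext x
  have hx := descend c (fun x => hc ▸ Subgroup.mem_top _) x
  rwa [Subgroup.upperCentralSeries_zero, Subgroup.mem_bot, inv_mul_eq_one] at hx

/-- let η : H → G be an envelope (f ↦ f∘η maps End(G) onto Hom(H,G)
and every endomorphism of G fixing η is an automorphism) with G nilpotent.
Then η is a localization iff the Galois group of η is trivial. -/
theorem nilpotent_envelope_localization_iff_trivial_Galois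
    {H G : Type} [Group H] [Group G] [Group.IsNilpotent G] (η : H →* G)
    (hsurj : Function.Surjective (fun f : G →* G => f.comp η))
    (henv : ∀ f : G →* G, f.comp η = η → Function.Bijective f) :
    Function.Bijective (fun f : G →* G => f.comp η) ↔
      (∀ f : G ≃* G, f.toMonoidHom.comp η = η → f = MulEquiv.refl G) := by
  constructor
  · intro hloc f hf
    have hid : f.toMonoidHom = MonoidHom.id G := hloc.1 (by simpa using hf)
    ext x
    exact DFunLike.congr_fun hid x
  · intro hGal
    refine ⟨injective_comp_of_rigid fun e he => ?_, hsurj⟩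
    have hid := hGal (MulEquiv.ofBijective e (henv e he)) he
    ext x
    exact DFunLike.congr_fun hid x
end

section
/- Let p be an odd prime. The inclusion i : C_p ↪ D_{2p} of the cyclic group of order p into the dihedral group of order 2p is an envelope: every homomorphism C_p → D_{2p} extends along i to an endomorphism of D_{2p}, and every endomorphism f of D_{2p} with f∘i = i is an automorphism. Moreover the Galois group Gal(i) = {f ∈ Aut(D_{2p}) : f∘i = i} is isomorphic to C_p. -/
/-- The embedding of the cyclic group of order n (multiplicatively written) as the
rotation subgroup of the dihedral group of order 2n. -/
def rotHom (n : ℕ) : Multiplicative (ZMod n) →* DihedralGroup n where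
  toFun x := DihedralGroup.r x.toAdd
  map_one' := rfl
  map_mul' _ _ := rfl

/-- The Galois group of a homomorphism φ : H → G, i.e. the subgroup
{f ∈ Aut(G) : f∘φ = φ} of Aut(G). -/
def galGroup {H G : Type} [Group H] [Group G] (φ : H →* G) : Subgroup (MulAut G) where
  carrier := {f | ∀ h, f (φ h) = φ h}
  one_mem' _ := rfl
  mul_mem' {a b} ha hb h := by rw [MulAut.mul_apply, hb h, ha h]
  inv_mem' {a} ha h := by
    conv_lhs => rw [← ha h]
    exact a.symm_apply_apply _

/-! The relevant endomorphisms of `D_{2p}` are the affine maps `r i ↦ r (a * i)`,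
`sr i ↦ sr (a * i + b)`. A homomorphism `C_p → D_{2p}` has image of odd order, so it misses
the reflections and is `i ↦ r (a * i)` for some `a`; it extends with `b = 0`. An endomorphism
fixing the rotations cannot send `sr 0` to a rotation `r c`, since `sr 0` inverts `r 1` while
`r c` commutes with it and `r 1 ≠ r (-1)` as `p ≠ 2`; so it is affine with `a = 1`, a
translation of the reflections. The translations form a copy of `C_p` in `Aut(D_{2p})`,
which is therefore the whole Galois group. -/

lemma ZMod.two_ne_zero_of_odd {n : ℕ} (hodd : Odd n) (hn : n ≠ 1) : (2 : ZMod n) ≠ 0 := by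
  intro h
  have hdvd : n ∣ 2 := (ZMod.natCast_eq_zero_iff 2 n).1 (by exact_mod_cast h)
  rcases (Nat.dvd_prime Nat.prime_two).1 hdvd with rfl | rfl
  · exact hn rfl
  · exact Nat.not_odd_iff_even.2 even_two hodd

lemma MonoidHom.ext_zmod {n : ℕ} {M : Type*} [Monoid M] {f g : Multiplicative (ZMod n) →* M}
    (h : f (.ofAdd 1) = g (.ofAdd 1)) : f = g := by
  have hsurj : Function.Surjective (Int.castAddHom (ZMod n)).toMultiplicative :=
    ZMod.intCast_surjective
  refine (MonoidHom.cancel_right hsurj).1 (MonoidHom.ext_mint ?_)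
  simpa using h

namespace DihedralGroup

variable {n : ℕ}

@[simp]
lemma rotHom_apply (x : Multiplicative (ZMod n)) : rotHom n x = r x.toAdd := rfl

lemma sr_pow_of_odd {k : ℕ} (hk : Odd k) (i : ZMod n) : sr i ^ k = sr i := by
  obtain ⟨m, rfl⟩ := hk
  rw [pow_succ, pow_mul, sq, sr_mul_self, one_pow, one_mul]

def affineHom (a b : ZMod n) : DihedralGroup n →* DihedralGroup n where
  toFun
    | r i => r (a * i)
    | sr i => sr (a * i + b)
  map_one' := by
    show r (a * 0) = 1
    rw [mul_zero, one_def]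
  map_mul' x y := by
    rcases x with i | i <;> rcases y with j | j <;>
      simp only [r_mul_r, r_mul_sr, sr_mul_r, sr_mul_sr] <;> congr 1 <;> ring

@[simp]
lemma affineHom_r (a b i : ZMod n) : affineHom a b (r i) = r (a * i) := rfl

@[simp]
lemma affineHom_sr (a b i : ZMod n) : affineHom a b (sr i) = sr (a * i + b) := rfl

lemma affineHom_one_add (b c : ZMod n) :
    affineHom 1 (b + c) = (affineHom 1 b).comp (affineHom 1 c) := by
  ext (i | i) <;> simp only [affineHom_r, affineHom_sr, MonoidHom.comp_apply] <;>
    congr 1 <;> ring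

lemma affineHom_one_zero : affineHom (1 : ZMod n) 0 = MonoidHom.id _ := by
  ext (i | i) <;> simp

def translation (b : ZMod n) : MulAut (DihedralGroup n) :=
  MonoidHom.toMulEquiv (affineHom 1 b) (affineHom 1 (-b))
    (by rw [← affineHom_one_add, neg_add_cancel, affineHom_one_zero])
    (by rw [← affineHom_one_add, add_neg_cancel, affineHom_one_zero])

@[simp]
lemma translation_apply (b : ZMod n) (x : DihedralGroup n) :
    translation b x = affineHom 1 b x := rfl

def translationHom : Multiplicative (ZMod n) →* MulAut (DihedralGroup n) where
  toFun b := translation b.toAdd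
  map_one' := MulEquiv.ext fun x => by
    simp [affineHom_one_zero]
  map_mul' b c := MulEquiv.ext fun x => by
    simp [affineHom_one_add]

lemma translationHom_injective : Function.Injective (translationHom (n := n)) := by
  intro b c h
  simpa [translationHom] using congr($h (sr 0))

lemma exists_eq_affineHom_comp_rotHom (hodd : Odd n)
    (g : Multiplicative (ZMod n) →* DihedralGroup n) :
    ∃ a, g = (affineHom a 0).comp (rotHom n) := by
  have hgen : g (.ofAdd 1) ^ n = 1 := by
    rw [← map_pow, ← ofAdd_nsmul, nsmul_one, ZMod.natCast_self, ofAdd_zero, map_one]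
  cases hg : g (.ofAdd 1) with
  | r a => exact ⟨a, MonoidHom.ext_zmod (by simp [hg])⟩
  | sr c =>
    rw [hg, sr_pow_of_odd hodd, one_def] at hgen
    cases hgen

lemma exists_eq_affineHom_one_of_comp_rotHom_eq (htwo : (2 : ZMod n) ≠ 0)
    {f : DihedralGroup n →* DihedralGroup n} (hf : f.comp (rotHom n) = rotHom n) :
    ∃ b, f = affineHom 1 b := by
  have hr (i : ZMod n) : f (r i) = r i := congr($hf (.ofAdd i))
  have hinv : f (sr 0) * r 1 = r (-1) * f (sr 0) := by
    rw [← hr 1, ← hr (-1), ← map_mul, ← map_mul, sr_mul_r, r_mul_sr, sub_neg_eq_add]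
  cases h0 : f (sr 0) with
  | r c =>
    rw [h0, r_mul_r, r_mul_r, r.injEq] at hinv
    exact absurd (by linear_combination hinv) htwo
  | sr b =>
    refine ⟨b, MonoidHom.ext fun
      | r i => by rw [hr, affineHom_r, one_mul]
      | sr i => ?_⟩
    have hsr : sr i = sr 0 * r i := by rw [sr_mul_r, zero_add]
    rw [hsr, map_mul, map_mul, h0, hr, affineHom_sr, affineHom_r, mul_zero, zero_add, one_mul]

lemma galGroup_rotHom_eq_range (htwo : (2 : ZMod n) ≠ 0) :
    galGroup (rotHom n) = translationHom.range := by
  ext f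
  constructor
  · intro hf
    obtain ⟨b, hb⟩ := exists_eq_affineHom_one_of_comp_rotHom_eq htwo
      (f := f.toMonoidHom) (MonoidHom.ext hf)
    exact ⟨.ofAdd b, MulEquiv.ext fun x => congr($hb x).symm⟩
  · rintro ⟨b, rfl⟩ x
    simp [translationHom]

end DihedralGroup

/-- for an odd prime p, the inclusion C_p ↪ D_{2p} is an envelope:
every homomorphism C_p → D_{2p} extends to an endomorphism of D_{2p}, every
endomorphism of D_{2p} restricting to the inclusion is an automorphism, and the
Galois group is isomorphic to C_p. -/
theorem cyclic_in_dihedral_is_envelope (p : ℕ) (hp : p.Prime) (hodd : Odd p) :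
    Function.Surjective
      (fun f : DihedralGroup p →* DihedralGroup p => f.comp (rotHom p)) ∧
    (∀ f : DihedralGroup p →* DihedralGroup p,
      f.comp (rotHom p) = rotHom p → Function.Bijective f) ∧
    Nonempty (↥(galGroup (rotHom p)) ≃* Multiplicative (ZMod p)) := by
  have htwo : (2 : ZMod p) ≠ 0 := ZMod.two_ne_zero_of_odd hodd hp.ne_one
  refine ⟨fun g => ?_, fun f hf => ?_, ⟨?_⟩⟩
  · obtain ⟨a, rfl⟩ := DihedralGroup.exists_eq_affineHom_comp_rotHom hodd g
    exact ⟨_, rfl⟩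
  · obtain ⟨b, rfl⟩ := DihedralGroup.exists_eq_affineHom_one_of_comp_rotHom_eq htwo hf
    exact (DihedralGroup.translation b).bijective
  · exact (MulEquiv.subgroupCongr (DihedralGroup.galGroup_rotHom_eq_range htwo)).trans
      (MonoidHom.ofInjective DihedralGroup.translationHom_injective).symm
end

section
/- Let G = ⟨x, y | y² = 1, y x y⁻¹ = x⁻¹⟩ be the infinite dihedral group. The inclusion of the infinite cyclic subgroup ⟨x⟩ into G is an envelope, and its Galois group {f ∈ Aut(G) : f restricts to the identity on ⟨x⟩} is isomorphic to ℤ. -/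
/-!
A homomorphism out of `D∞ = ⟨r, s⟩` amounts to a pair `(a, b)` with `b² = 1` and `b a b⁻¹ = a⁻¹`.
Every element of `D∞` is inverted by some reflection, so every homomorphism `ℤ → D∞` extends.
An endomorphism fixing the rotations sends `s` to an element conjugating `r` to `r⁻¹`, which can
only be a reflection `s rᵏ`; the endomorphism is then the shift `s rⁱ ↦ s rᵏ⁺ⁱ`, an automorphism,
and `k ↦ (shift by k)` identifies the Galois group with `ℤ`.
-/

theorem SemiconjBy.zpow_mul_eq_mul_zpow_neg {G : Type*} [Group G] {a b : G}
    (hba : SemiconjBy b a a⁻¹) (i : ℤ) : a ^ i * b = b * a ^ (-i) := by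
  rw [(hba.zpow_right (-i)).eq, inv_zpow', neg_neg]

namespace DihedralGroup

variable {n : ℕ}

section LiftZero

variable {G : Type*} [Group G]

def liftZero (a b : G) (hb : b * b = 1) (hba : SemiconjBy b a a⁻¹) : DihedralGroup 0 →* G where
  toFun
    | r i => a ^ (show ℤ from i)
    | sr i => b * a ^ (show ℤ from i)
  map_one' := zpow_zero a
  map_mul' := by
    rintro (i | i) (j | j)
    · exact zpow_add a i j
    · show b * a ^ (show ℤ from j - i) = a ^ (show ℤ from i) * (b * a ^ (show ℤ from j))
      rw [← mul_assoc, hba.zpow_mul_eq_mul_zpow_neg, mul_assoc, ← zpow_add, neg_add_eq_sub]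
      rfl
    · show b * a ^ (show ℤ from i + j) = b * a ^ (show ℤ from i) * a ^ (show ℤ from j)
      rw [mul_assoc, ← zpow_add]
      rfl
    · show a ^ (show ℤ from j - i) = b * a ^ (show ℤ from i) * (b * a ^ (show ℤ from j))
      rw [mul_assoc, ← mul_assoc _ b, hba.zpow_mul_eq_mul_zpow_neg, mul_assoc, ← mul_assoc b, hb,
        one_mul, ← zpow_add, neg_add_eq_sub]
      rfl

lemma liftZero_comp_rotHom {a b : G} (hb : b * b = 1) (hba : SemiconjBy b a a⁻¹) :
    (liftZero a b hb hba).comp (rotHom 0) = zpowersHom G a :=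
  rfl

end LiftZero

lemma exists_involution_semiconjBy_inv (g : DihedralGroup n) :
    ∃ b, b * b = 1 ∧ SemiconjBy b g g⁻¹ := by
  rcases g with k | k
  · refine ⟨sr 0, sr_mul_self 0, ?_⟩
    simp only [SemiconjBy, sr_mul_r, inv_r, r_mul_sr]
    ring_nf
  · exact ⟨sr k, sr_mul_self k, by rw [inv_sr]; exact Commute.refl _⟩

lemma surjective_comp_rotHom_zero :
    Function.Surjective (fun f : DihedralGroup 0 →* DihedralGroup 0 => f.comp (rotHom 0)) := by
  intro ψ
  obtain ⟨b, hb, hba⟩ := exists_involution_semiconjBy_inv (ψ (.ofAdd 1))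
  refine ⟨liftZero _ b hb hba, ?_⟩
  show (liftZero _ b hb hba).comp (rotHom 0) = ψ
  rw [liftZero_comp_rotHom]
  exact (zpowersHom _).apply_symm_apply ψ

@[simps]
def shiftSr (k : ZMod n) : DihedralGroup n ≃* DihedralGroup n where
  toFun
    | r i => r i
    | sr i => sr (k + i)
  invFun
    | r i => r i
    | sr i => sr (-k + i)
  left_inv := by rintro (i | i) <;> simp
  right_inv := by rintro (i | i) <;> simp
  map_mul' := by rintro (i | i) (j | j) <;> simp <;> ring

lemma shiftSr_add (k l : ZMod n) : shiftSr (k + l) = shiftSr k * shiftSr l := by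
  ext (i | i) <;> simp [add_assoc]

lemma eq_shiftSr_of_apply_r (hn : (-1 : ZMod n) ≠ 1) (f : DihedralGroup n →* DihedralGroup n)
    (hf : ∀ i, f (r i) = r i) : ∃ k, ⇑f = shiftSr k := by
  obtain ⟨k, hk⟩ : ∃ k, f (sr 0) = sr k := by
    have hconj : f (sr 0) * r 1 = r (-1) * f (sr 0) := by
      rw [← hf 1, ← hf (-1), ← map_mul, ← map_mul, sr_mul_r, r_mul_sr, zero_add, zero_sub, neg_neg]
    -- a rotation commutes with `r 1`, so it cannot conjugate `r 1` to `r (-1)`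
    rcases hfs : f (sr 0) with m | m
    · rw [hfs, r_mul_r, r_mul_r, add_comm (-1)] at hconj
      exact absurd (add_left_cancel (r.inj hconj)).symm hn
    · exact ⟨m, rfl⟩
  refine ⟨k, funext ?_⟩
  rintro (i | i)
  · exact hf i
  · calc f (sr i) = f (sr 0 * r i) := by rw [sr_mul_r, zero_add]
      _ = sr (k + i) := by rw [map_mul, hk, hf, sr_mul_r]

def shiftSrHom : Multiplicative (ZMod n) →* galGroup (rotHom n) :=
  MonoidHom.mk' (fun k => ⟨shiftSr k.toAdd, fun _ => rfl⟩) fun k l =>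
    Subtype.ext (shiftSr_add k.toAdd l.toAdd)

lemma bijective_shiftSrHom (hn : (-1 : ZMod n) ≠ 1) :
    Function.Bijective (shiftSrHom (n := n)) := by
  refine ⟨fun k l hkl => ?_, fun ⟨f, hf⟩ => ?_⟩
  · have h := congrArg (fun f : galGroup (rotHom n) => f.1 (sr 0)) hkl
    simpa [shiftSrHom] using h
  · obtain ⟨k, hk⟩ := eq_shiftSr_of_apply_r hn f.toMonoidHom fun i => hf (.ofAdd i)
    exact ⟨.ofAdd k, Subtype.ext (MulEquiv.ext fun x => (congrFun hk x).symm)⟩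

end DihedralGroup

open DihedralGroup

/-- the inclusion of the infinite cyclic subgroup ⟨x⟩ into the
infinite dihedral group G = ⟨x, y ∣ y² = 1, y x y⁻¹ = x⁻¹⟩ (= `DihedralGroup 0`,
since `ZMod 0 = ℤ`) is an envelope, with Galois group isomorphic to ℤ. -/
theorem infinite_cyclic_in_infinite_dihedral_is_envelope :
    Function.Surjective
      (fun f : DihedralGroup 0 →* DihedralGroup 0 => f.comp (rotHom 0)) ∧
    (∀ f : DihedralGroup 0 →* DihedralGroup 0,
      f.comp (rotHom 0) = rotHom 0 → Function.Bijective f) ∧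
    Nonempty (↥(galGroup (rotHom 0)) ≃* Multiplicative ℤ) := by
  have hn : (-1 : ZMod 0) ≠ 1 := by decide
  refine ⟨surjective_comp_rotHom_zero, fun f hf => ?_,
    ⟨(MulEquiv.ofBijective _ (bijective_shiftSrHom hn)).symm⟩⟩
  obtain ⟨k, hk⟩ := eq_shiftSr_of_apply_r hn f fun i => DFunLike.congr_fun hf (.ofAdd i)
  exact hk ▸ (shiftSr k).bijective
end

section
/- Let H be a non-abelian simple subgroup of a finite simple group G, with inclusion i : H ↪ G, and assume both H and G are complete groups (trivial center and every automorphism inner). Then i is an envelope if and only if every subgroup of G isomorphic to H is conjugate to H in G. -/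
/-- let H be a non-abelian simple subgroup of a finite simple group G,
with both H and G complete (trivial center and every automorphism inner).  Then the
inclusion i : H ↪ G is an envelope iff every subgroup of G isomorphic to H is
conjugate to H in G. -/
theorem complete_simple_inclusion_envelope_iff_conjugate
    {G : Type} [Group G] [Finite G] [IsSimpleGroup G]
    (H : Subgroup G) [IsSimpleGroup ↥H] (hH : ∃ a b : ↥H, a * b ≠ b * a)
    (hGcenter : Subgroup.center G = ⊥)
    (hGinner : ∀ f : G ≃* G, ∃ g : G, f = MulAut.conj g)
    (hHcenter : Subgroup.center ↥H = ⊥)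
    (hHinner : ∀ f : ↥H ≃* ↥H, ∃ h : ↥H, f = MulAut.conj h) :
    (Function.Surjective (fun f : G →* G => f.comp H.subtype) ∧
      ∀ f : G →* G, f.comp H.subtype = H.subtype → Function.Bijective f) ↔
    (∀ K : Subgroup G, Nonempty (↥H ≃* ↥K) →
      ∃ g : G, K.map (MulAut.conj g).toMonoidHom = H) := by
  obtain ⟨a, b, hab⟩ := hH
  have ha : a ≠ 1 := by rintro rfl; simp at hab
  constructor
  · rintro ⟨hsurj, -⟩ K ⟨e⟩
    obtain ⟨f, hf⟩ := hsurj (K.subtype.comp e.toMonoidHom)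
    simp only at hf
    have hfa : f (a : G) = ((e a : K) : G) := by
      have := congrArg (fun φ => φ a) hf
      simpa using this
    have hfane : f (a : G) ≠ 1 := by
      rw [hfa]
      simp only [ne_eq, OneMemClass.coe_eq_one, EmbeddingLike.map_eq_one_iff]
      exact ha
    have hker := (f.normal_ker).eq_bot_or_eq_top
    rcases hker with hk | hk
    · have hinj : Function.Injective f := (MonoidHom.ker_eq_bot_iff f).mp hk
      have hbij : Function.Bijective f := Finite.injective_iff_bijective.mp hinj
      obtain ⟨g, hg⟩ := hGinner (MulEquiv.ofBijective f hbij)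
      have hfg : ∀ x : G, f x = g * x * g⁻¹ := by
        intro x
        have := congrArg (fun e => e x) hg
        simpa [MulAut.conj] using this
      refine ⟨g⁻¹, ?_⟩
      have h1 : H.map f = K := by
        have h2 : H.map f = (f.comp H.subtype).range := by
          rw [MonoidHom.range_comp, Subgroup.range_subtype]
        rw [h2, hf, MonoidHom.range_comp]
        rw [MonoidHom.range_eq_top_of_surjective _ e.surjective]
        rw [← MonoidHom.range_eq_map, Subgroup.range_subtype]
      have hfeq : f = (MulAut.conj g).toMonoidHom := by
        ext x; simpa using hfg x
      rw [← h1, hfeq, Subgroup.map_map]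
      have : ((MulAut.conj g⁻¹).toMonoidHom.comp (MulAut.conj g).toMonoidHom : G →* G) = MonoidHom.id G := by
        ext x; simp; group
      rw [this, Subgroup.map_id]
    · exact absurd (by rw [← MonoidHom.mem_ker, hk]; trivial) hfane
  · intro hconj
    constructor
    · intro φ
      have hker := (φ.normal_ker).eq_bot_or_eq_top
      rcases hker with hk | hk
      · have hinj : Function.Injective φ := (MonoidHom.ker_eq_bot_iff φ).mp hk
        have hKiso : Nonempty (↥H ≃* ↥φ.range) := ⟨MonoidHom.ofInjective hinj⟩
        obtain ⟨g, hg⟩ := hconj φ.range hKiso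
        -- ψ : H ≃* H
        let e1 : ↥H ≃* ↥φ.range := MonoidHom.ofInjective hinj
        let e2 : ↥φ.range ≃* ↥(φ.range.map (MulAut.conj g).toMonoidHom) :=
          (MulAut.conj g).subgroupMap φ.range
        let e3 : ↥(φ.range.map (MulAut.conj g).toMonoidHom) ≃* ↥H :=
          MulEquiv.subgroupCongr hg
        obtain ⟨h, hh⟩ := hHinner ((e1.trans e2).trans e3)
        refine ⟨(MulAut.conj (g⁻¹ * (h : G))).toMonoidHom, ?_⟩
        simp only
        ext x
        have key : g * φ x * g⁻¹ = ((((e1.trans e2).trans e3) x : ↥H) : G) := by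
          rfl
        have key2 : (((MulAut.conj h x : ↥H) : G)) = (h : G) * (x : G) * (h : G)⁻¹ := by
          simp [MulAut.conj]
        rw [hh] at key
        rw [key2] at key
        have : φ x = g⁻¹ * ((h : G) * (x : G) * (h : G)⁻¹) * g := by
          rw [← key]; group
        simp [MulAut.conj, this]
        group
      · refine ⟨1, ?_⟩
        simp only
        ext x
        have : x ∈ φ.ker := by rw [hk]; trivial
        simpa [MonoidHom.mem_ker] using this.symm
    · intro f hf
      have hfa : f (a : G) = (a : G) := by
        have := congrArg (fun φ => φ a) hf
        simpa using this
      have haG : (a : G) ≠ 1 := by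
        simpa using ha
      have hker := (f.normal_ker).eq_bot_or_eq_top
      rcases hker with hk | hk
      · exact Finite.injective_iff_bijective.mp ((MonoidHom.ker_eq_bot_iff f).mp hk)
      · exfalso
        apply haG
        rw [← hfa, ← MonoidHom.mem_ker, hk]; trivial
end
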